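/- arXiv:2504.20116 — 5 statements merged into one kernel-verified Lean document; each statement's English description precedes it below -/
import Mathlib

section
/- Let β be an integer with β ≥ 2 or β ≤ −1, let μ be a real number with μ > −1 and βμ > −1, and let X_1, …, X_n be independent integrable real random variables on a probability space, each with expectation E[X_t] = μ. Define the n-period compounding effect CE_n := (∏_{t=1}^n (1 + βX_t) − 1) − β(∏_{t=1}^n (1 + X_t) − 1). Then E[CE_n] = ((1 + βμ)^n − 1) − β((1 + μ)^n − 1), and this quantity is nonnegative for every n ≥ 1. Moreover, if μ = 0 then E[CE_n] = 0 for all n ≥ 1. -/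
/-!
Independence factors the expectation of each product, so `E[CE_n]` is the deterministic
compounding effect of the constant return `μ`. Its sign comes from convexity of
`f x = (1 + x) ^ n` on `[-1, ∞)`: an integer `β` lies outside `(0, 1)`, so either `μ` lies
between `0` and `βμ` (when `β ≥ 1`) or `0` lies between `βμ` and `μ` (when `β ≤ 0`), and in
both cases convexity gives `β (f μ - f 0) ≤ f (βμ) - f 0`.
-/

open MeasureTheory ProbabilityTheory Set

theorem ConvexOn.mul_sub_le_apply_mul_sub {f : ℝ → ℝ} {s : Set ℝ} (hf : ConvexOn ℝ s f)
    {β x : ℝ} (hβ : β ≤ 0 ∨ 1 ≤ β) (h0 : 0 ∈ s) (hx : x ∈ s) (hβx : β * x ∈ s) :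
    β * (f x - f 0) ≤ f (β * x) - f 0 := by
  rcases hβ with hβ | hβ
  · have hpos : 0 < 1 - β := by linarith
    have hconvex := hf.2 hβx hx (inv_nonneg.2 hpos.le) (div_nonneg (neg_nonneg.2 hβ) hpos.le)
      (by field_simp; ring)
    have hcomb : (1 - β)⁻¹ • (β * x) + (-β / (1 - β)) • x = 0 := by
      simp only [smul_eq_mul]; field_simp; ring
    rw [hcomb, smul_eq_mul, smul_eq_mul] at hconvex
    have hscaled := mul_le_mul_of_nonneg_left hconvex hpos.le
    field_simp at hscaled
    linarith
  · have hpos : 0 < β := by linarith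
    have hconvex := hf.2 hβx h0 (inv_nonneg.2 hpos.le) (sub_nonneg.2 (inv_le_one_of_one_le₀ hβ))
      (by ring)
    have hcomb : β⁻¹ • (β * x) + (1 - β⁻¹) • (0 : ℝ) = x := by
      simp only [smul_eq_mul, mul_zero, add_zero]; field_simp
    rw [hcomb, smul_eq_mul, smul_eq_mul] at hconvex
    have hscaled := mul_le_mul_of_nonneg_left hconvex hpos.le
    field_simp at hscaled
    linarith

theorem mul_one_add_pow_sub_one_le {β μ : ℝ} (hβ : β ≤ 0 ∨ 1 ≤ β) (hμ : -1 ≤ μ)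
    (hβμ : -1 ≤ β * μ) (n : ℕ) :
    β * ((1 + μ) ^ n - 1) ≤ (1 + β * μ) ^ n - 1 := by
  have hconv : ConvexOn ℝ ((fun x => 1 + x) ⁻¹' Ici 0) fun x : ℝ => (1 + x) ^ n :=
    (convexOn_pow n).translate_right 1
  have hmem : ∀ {x : ℝ}, -1 ≤ x → x ∈ (fun x => 1 + x) ⁻¹' Ici 0 := fun hx => by
    simp only [mem_preimage, mem_Ici]; linarith
  simpa using hconv.mul_sub_le_apply_mul_sub hβ (hmem (by norm_num)) (hmem hμ) (hmem hβμ)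

section Independence

variable {Ω ι : Type*} [MeasurableSpace Ω] {P : Measure Ω} [Fintype ι]

theorem ProbabilityTheory.iIndepFun.integrable_fun_prod {𝕜 : Type*} [RCLike 𝕜]
    {X : ι → Ω → 𝕜} (hX : iIndepFun X P) (hint : ∀ i, Integrable (X i) P) :
    Integrable (fun ω => ∏ i, X i ω) P := by
  have := hX.isProbabilityMeasure
  have hmeas : ∀ i, AEMeasurable (X i) P := fun i => (hint i).aemeasurable
  have hprod : Integrable (fun x : ι → 𝕜 => ∏ i, x i) (P.map fun ω i => X i ω) := by
    rw [hX.map_fun_eq_pi_map hmeas]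
    exact Integrable.fintype_prod (f := fun _ => id) fun i =>
      (integrable_map_measure aestronglyMeasurable_id (hmeas i)).2 (hint i)
  exact hprod.comp_aemeasurable (aemeasurable_pi_lambda _ hmeas)

theorem ProbabilityTheory.iIndepFun.integral_prod_one_add_mul
    {X : ι → Ω → ℝ} (hX : iIndepFun X P) (hint : ∀ i, Integrable (X i) P) {m : ℝ}
    (hmean : ∀ i, ∫ ω, X i ω ∂P = m) (c : ℝ) :
    Integrable (fun ω => ∏ i, (1 + c * X i ω)) P ∧
      ∫ ω, ∏ i, (1 + c * X i ω) ∂P = (1 + c * m) ^ Fintype.card ι := by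
  have := hX.isProbabilityMeasure
  have hY : iIndepFun (fun i ω => 1 + c * X i ω) P :=
    hX.comp (fun _ x => 1 + c * x) fun _ => by fun_prop
  have hintY : ∀ i, Integrable (fun ω => 1 + c * X i ω) P := fun i =>
    (integrable_const 1).add ((hint i).const_mul c)
  refine ⟨hY.integrable_fun_prod hintY, ?_⟩
  rw [hY.integral_fun_prod_eq_prod_integral fun i => (hintY i).aestronglyMeasurable]
  have hEY : ∀ i, ∫ ω, 1 + c * X i ω ∂P = 1 + c * m := fun i => by
    rw [integral_add (integrable_const 1) ((hint i).const_mul c), integral_const_mul, hmean i]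
    simp
  simp [hEY]

end Independence

theorem stmt0_general {Ω : Type*} [MeasurableSpace Ω] (P : Measure Ω) [IsProbabilityMeasure P]
    (β : ℤ) (μ : ℝ) (hμ : -1 < μ) (hβμ : -1 < (β : ℝ) * μ)
    (n : ℕ) (X : Fin n → Ω → ℝ)
    (hindep : iIndepFun X P)
    (hint : ∀ t, Integrable (X t) P)
    (hmean : ∀ t, ∫ ω, X t ω ∂P = μ) :
    (∫ ω, (((∏ t, (1 + (β : ℝ) * X t ω)) - 1)
        - (β : ℝ) * ((∏ t, (1 + X t ω)) - 1)) ∂P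
      = ((1 + (β : ℝ) * μ) ^ n - 1) - (β : ℝ) * ((1 + μ) ^ n - 1))
    ∧ ((1 + (β : ℝ) * μ) ^ n - 1) - (β : ℝ) * ((1 + μ) ^ n - 1) ≥ 0
    ∧ (μ = 0 →
        ∫ ω, (((∏ t, (1 + (β : ℝ) * X t ω)) - 1)
          - (β : ℝ) * ((∏ t, (1 + X t ω)) - 1)) ∂P = 0) := by
  obtain ⟨hIβ, hEβ⟩ := hindep.integral_prod_one_add_mul hint hmean β
  obtain ⟨hI1, hE1⟩ := hindep.integral_prod_one_add_mul hint hmean 1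
  simp only [one_mul, Fintype.card_fin] at hI1 hE1 hEβ
  have hE : ∫ ω, (((∏ t, (1 + (β : ℝ) * X t ω)) - 1)
        - (β : ℝ) * ((∏ t, (1 + X t ω)) - 1)) ∂P
      = ((1 + (β : ℝ) * μ) ^ n - 1) - (β : ℝ) * ((1 + μ) ^ n - 1) := by
    have hIβ' : Integrable (fun ω => (∏ t, (1 + (β : ℝ) * X t ω)) - 1) P :=
      hIβ.sub (integrable_const 1)
    have hI1' : Integrable (fun ω => (β : ℝ) * ((∏ t, (1 + X t ω)) - 1)) P :=
      (hI1.sub (integrable_const 1)).const_mul _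
    rw [integral_sub hIβ' hI1', integral_const_mul, integral_sub hIβ (integrable_const 1),
      integral_sub hI1 (integrable_const 1), hEβ, hE1]
    simp
  have hβ' : (β : ℝ) ≤ 0 ∨ 1 ≤ (β : ℝ) := by
    rcases le_or_gt β 0 with h | h
    · exact Or.inl (by exact_mod_cast h)
    · exact Or.inr (by exact_mod_cast h)
  refine ⟨hE, sub_nonneg.2 (mul_one_add_pow_sub_one_le hβ' hμ.le hβμ.le n), fun hμ0 => ?_⟩
  rw [hE, hμ0]
  simp

/-- For integer leverage `β` (with `β ≥ 2` or `β ≤ -1`), mean return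
`μ > -1` with `βμ > -1`, and independent integrable returns `X t` of common mean `μ`,
the expected `n`-period compounding effect
`CE_n = (∏ (1 + βX_t) - 1) - β(∏ (1 + X_t) - 1)` equals
`((1 + βμ)^n - 1) - β((1 + μ)^n - 1)`, which is nonnegative; and it vanishes if `μ = 0`. -/
theorem stmt0 {Ω : Type*} [MeasurableSpace Ω] (P : Measure Ω) [IsProbabilityMeasure P]
    (β : ℤ) (hβ : 2 ≤ β ∨ β ≤ -1) (μ : ℝ) (hμ : -1 < μ) (hβμ : -1 < (β : ℝ) * μ)
    (n : ℕ) (hn : 1 ≤ n) (X : Fin n → Ω → ℝ)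
    (hindep : iIndepFun X P)
    (hint : ∀ t, Integrable (X t) P)
    (hmean : ∀ t, ∫ ω, X t ω ∂P = μ) :
    (∫ ω, (((∏ t, (1 + (β : ℝ) * X t ω)) - 1)
        - (β : ℝ) * ((∏ t, (1 + X t ω)) - 1)) ∂P
      = ((1 + (β : ℝ) * μ) ^ n - 1) - (β : ℝ) * ((1 + μ) ^ n - 1))
    ∧ ((1 + (β : ℝ) * μ) ^ n - 1) - (β : ℝ) * ((1 + μ) ^ n - 1) ≥ 0
    ∧ (μ = 0 →
        ∫ ω, (((∏ t, (1 + (β : ℝ) * X t ω)) - 1)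
          - (β : ℝ) * ((∏ t, (1 + X t ω)) - 1)) ∂P = 0) :=
  stmt0_general P β μ hμ hβμ n X hindep hint hmean
end

section
/- Let β be an integer with β ≥ 2 or β ≤ −1, let μ be a real number with μ > −1 and βμ > −1, and let n ≥ 1 be a natural number. Then (1 + βμ)^n − 1 − β((1 + μ)^n − 1) ≥ 0. -/
/-- With integer leverage ratio `β` (with `β ≥ 2` or `β ≤ -1`) and mean
per-period return `μ` satisfying `μ > -1` and `βμ > -1`, the leveraged compound growth
dominates `β` times the unleveraged compound growth. -/
theorem stmt1 (β : ℤ) (hβ : 2 ≤ β ∨ β ≤ -1) (μ : ℝ) (hμ : -1 < μ)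
    (hβμ : -1 < (β : ℝ) * μ) (n : ℕ) (hn : 1 ≤ n) :
    (1 + (β : ℝ) * μ) ^ n - 1 - (β : ℝ) * ((1 + μ) ^ n - 1) ≥ 0 := by
  have ha : (0:ℝ) < 1 + μ := by linarith
  have hb : (0:ℝ) < 1 + (β : ℝ) * μ := by linarith
  have hββ : (0:ℝ) ≤ (β : ℝ) * ((β : ℝ) - 1) := by
    rcases hβ with h | h
    · have : (2:ℝ) ≤ (β : ℝ) := by exact_mod_cast h
      nlinarith
    · have : (β : ℝ) ≤ -1 := by exact_mod_cast h
      nlinarith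
  have key : ∀ m : ℕ, (β : ℝ) * μ * ((1 + (β : ℝ) * μ) ^ m - (1 + μ) ^ m) ≥ 0 := by
    intro m
    rcases lt_trichotomy (1 + (β : ℝ) * μ) (1 + μ) with h | h | h
    · have h1 : ((β : ℝ) - 1) * μ < 0 := by linarith
      have h2 : (β : ℝ) * μ ≤ 0 := by nlinarith [mul_self_nonneg μ]
      have h3 : (1 + (β : ℝ) * μ) ^ m ≤ (1 + μ) ^ m :=
        pow_le_pow_left₀ hb.le h.le m
      nlinarith
    · rw [h]; simp
    · have h1 : (0:ℝ) < ((β : ℝ) - 1) * μ := by linarith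
      have h2 : (0:ℝ) ≤ (β : ℝ) * μ := by nlinarith [mul_self_nonneg μ]
      have h3 : (1 + μ) ^ m ≤ (1 + (β : ℝ) * μ) ^ m :=
        pow_le_pow_left₀ ha.le h.le m
      nlinarith
  induction n, hn using Nat.le_induction with
  | base => simp
  | succ n hn ih =>
    have hk := key n
    rw [pow_succ, pow_succ]
    nlinarith [ih, hk]
end

section
/- Let n ≥ 1 and let Z_1, …, Z_n be real numbers with |Z_t| ≤ M for all t, where M ≥ 0 and nM ≤ 1. Then |∏_{t=1}^n (1 + Z_t) − 1 − ∑_{t=1}^n Z_t − ∑_{1 ≤ t < s ≤ n} Z_t Z_s| ≤ n³M³. -/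
/-!
Expanding `∏ (1 + Z t)` gives `∑ₖ eₖ`, where `eₖ` is the `k`-th elementary symmetric sum of the
`Z t`; here `e₀ = 1`, `e₁ = ∑ Z t` and `e₂ = ∑_{t < s} Z t Z s`. Each `eₖ` has `C(n, k)` terms of
size at most `Mᵏ`, so `|eₖ| ≤ (nM)ᵏ / k!`. As `nM ≤ 1` and `k! ≥ 3! 2ᵏ⁻³`, the tail
`∑_{k ≥ 3} (nM)ᵏ / k!` is at most `(nM)³ / 3`.
-/

open Finset Nat

variable {ι R β : Type*}

theorem prod_one_add_eq_sum_range_powersetCard [CommSemiring R] (s : Finset ι) (f : ι → R)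
    {N : ℕ} (hN : #s < N) :
    ∏ i ∈ s, (1 + f i) = ∑ k ∈ range N, ∑ t ∈ s.powersetCard k, ∏ i ∈ t, f i := by
  rw [prod_one_add, sum_powerset]
  refine sum_subset (range_subset_range.2 hN) fun k _ hk => ?_
  rw [powersetCard_eq_empty.2 (by simpa using hk), sum_empty]

theorem sum_powersetCard_two [AddCommMonoid β] [LinearOrder ι] (s : Finset ι)
    (g : Finset ι → β) :
    ∑ t ∈ s.powersetCard 2, g t = ∑ p ∈ s ×ˢ s with p.1 < p.2, g {p.1, p.2} := by
  symm
  refine sum_bij (fun p _ => {p.1, p.2}) ?_ ?_ ?_ fun _ _ => rfl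
  · rintro ⟨a, b⟩ hab
    simp only [mem_filter, mem_product] at hab
    rw [mem_powersetCard, card_pair hab.2.ne]
    exact ⟨insert_subset hab.1.1 (singleton_subset_iff.2 hab.1.2), rfl⟩
  · rintro ⟨a, b⟩ hab ⟨c, d⟩ hcd h
    simp only [mem_filter] at hab hcd
    have h' := congrArg ((↑) : Finset ι → Set ι) h
    push_cast at h'
    rcases Set.pair_eq_pair_iff.1 h' with ⟨rfl, rfl⟩ | ⟨rfl, rfl⟩
    · rfl
    · exact absurd (hab.2.trans hcd.2) (lt_irrefl _)
  · intro t ht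
    obtain ⟨hts, htc⟩ := mem_powersetCard.1 ht
    obtain ⟨a, b, hab, rfl⟩ := card_eq_two.1 htc
    rcases hab.lt_or_gt with h | h
    · exact ⟨(a, b), by simp_all [insert_subset_iff], rfl⟩
    · exact ⟨(b, a), by simp_all [insert_subset_iff], pair_comm b a⟩

theorem abs_sum_powersetCard_prod_le [Field R] [LinearOrder R] [IsStrictOrderedRing R]
    {s : Finset ι} {f : ι → R} {C : R} (hC : 0 ≤ C) (hf : ∀ i ∈ s, |f i| ≤ C) (k : ℕ) :
    |∑ t ∈ s.powersetCard k, ∏ i ∈ t, f i| ≤ (#s * C) ^ k / k ! :=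
  calc |∑ t ∈ s.powersetCard k, ∏ i ∈ t, f i|
      ≤ ∑ t ∈ s.powersetCard k, ∏ i ∈ t, |f i| := by
        simpa only [abs_prod] using abs_sum_le_sum_abs (fun t => ∏ i ∈ t, f i) (s.powersetCard k)
    _ ≤ ∑ t ∈ s.powersetCard k, C ^ k := by
        refine sum_le_sum fun t ht => ?_
        obtain ⟨hts, rfl⟩ := mem_powersetCard.1 ht
        rw [← prod_const]
        exact prod_le_prod (fun i _ => abs_nonneg _) fun i hi => hf i (hts hi)
    _ = (#s).choose k * C ^ k := by rw [sum_const, card_powersetCard, nsmul_eq_mul]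
    _ ≤ #s ^ k / k ! * C ^ k :=
        mul_le_mul_of_nonneg_right (choose_le_pow_div k #s) (by positivity)
    _ = (#s * C) ^ k / k ! := by ring

theorem sum_range_pow_add_div_factorial_le {x : ℝ} (hx₀ : 0 ≤ x) (hx₁ : x ≤ 1) {j : ℕ}
    (hj : 1 ≤ j) (m : ℕ) :
    ∑ k ∈ range m, x ^ (j + k) / (j + k)! ≤ 2 * x ^ j / j ! := by
  have hterm (k : ℕ) : x ^ (j + k) / (j + k)! ≤ x ^ j / j ! * (1 / 2) ^ k := by
    have hfac : (j ! * 2 ^ k : ℝ) ≤ (j + k)! :=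
      calc (j ! * 2 ^ k : ℝ) ≤ j ! * (j + 1) ^ k := by gcongr; norm_cast; omega
        _ ≤ (j + k)! := by exact_mod_cast factorial_mul_pow_le_factorial
    calc x ^ (j + k) / (j + k)! ≤ x ^ j / (j ! * 2 ^ k) :=
          div_le_div₀ (by positivity) (pow_le_pow_of_le_one hx₀ hx₁ (by omega)) (by positivity)
            hfac
      _ = x ^ j / j ! * (1 / 2) ^ k := by rw [one_div_pow, mul_one_div, div_div]
  calc ∑ k ∈ range m, x ^ (j + k) / (j + k)! ≤ ∑ k ∈ range m, x ^ j / j ! * (1 / 2) ^ k :=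
        sum_le_sum fun k _ => hterm k
    _ = x ^ j / j ! * ∑ k ∈ range m, (1 / 2 : ℝ) ^ k := by rw [mul_sum]
    _ ≤ x ^ j / j ! * 2 := by gcongr; exact sum_geometric_two_le m
    _ = 2 * x ^ j / j ! := by ring

theorem stmt4_general (n : ℕ) (M : ℝ) (hM : 0 ≤ M) (hnM : (n : ℝ) * M ≤ 1)
    (Z : Fin n → ℝ) (hZ : ∀ t, |Z t| ≤ M) :
    |(∏ t, (1 + Z t)) - 1 - (∑ t, Z t)
        - ∑ p ∈ Finset.univ.filter (fun p : Fin n × Fin n => p.1 < p.2), Z p.1 * Z p.2|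
      ≤ (n : ℝ) ^ 3 * M ^ 3 := by
  set e : ℕ → ℝ := fun k => ∑ t ∈ univ.powersetCard k, ∏ i ∈ t, Z i
  have he₂ : e 2 = ∑ p ∈ univ.filter (fun p : Fin n × Fin n => p.1 < p.2), Z p.1 * Z p.2 := by
    dsimp only [e]
    rw [sum_powersetCard_two, univ_product_univ]
    exact sum_congr rfl fun p hp => prod_pair (mem_filter.1 hp).2.ne
  have hexpand : ∏ t, (1 + Z t) = 1 + ∑ t, Z t + e 2 + ∑ k ∈ range n, e (3 + k) := by
    rw [prod_one_add_eq_sum_range_powersetCard univ Z (N := 3 + n) (by simp), sum_range_add]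
    simp [e, sum_range_succ, powersetCard_one]
  rw [hexpand, ← he₂]
  calc |1 + ∑ t, Z t + e 2 + ∑ k ∈ range n, e (3 + k) - 1 - ∑ t, Z t - e 2|
      = |∑ k ∈ range n, e (3 + k)| := by congr 1; ring
    _ ≤ ∑ k ∈ range n, (n * M) ^ (3 + k) / (3 + k)! := by
        refine (abs_sum_le_sum_abs _ _).trans (sum_le_sum fun k _ => ?_)
        simpa [e] using abs_sum_powersetCard_prod_le (s := univ) hM (fun i _ => hZ i) (3 + k)
    _ ≤ 2 * (n * M) ^ 3 / 3 ! :=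
        sum_range_pow_add_div_factorial_le (j := 3) (by positivity) hnM (by norm_num) n
    _ ≤ n ^ 3 * M ^ 3 := by
        rw [mul_pow]; norm_num [factorial]; linarith [show 0 ≤ (n : ℝ) ^ 3 * M ^ 3 by positivity]

/-- second-order expansion of a compounded product: if `|Z t| ≤ M` for
all `t`, `M ≥ 0` and `nM ≤ 1`, then the remainder beyond the first and second
elementary symmetric terms is bounded by `n³M³`. -/
theorem stmt4 (n : ℕ) (hn : 1 ≤ n) (M : ℝ) (hM : 0 ≤ M) (hnM : (n : ℝ) * M ≤ 1)
    (Z : Fin n → ℝ) (hZ : ∀ t, |Z t| ≤ M) :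
    |(∏ t, (1 + Z t)) - 1 - (∑ t, Z t)
        - ∑ p ∈ Finset.univ.filter (fun p : Fin n × Fin n => p.1 < p.2), Z p.1 * Z p.2|
      ≤ (n : ℝ) ^ 3 * M ^ 3 :=
  stmt4_general n M hM hnM Z hZ
end

section
/- Fix an integer β ≠ 0. There is a constant C > 0 (depending only on β) with the following property. Let n ≥ 1, let 0 < M and nM ≤ 1, let f be a real number with |f| ≤ M, and let X_1, …, X_n, e_1, …, e_n be random variables on a probability space with |X_t| ≤ M and |e_t| ≤ M almost surely, E[X_t] = μ for all t, E[X_t X_s] = γ_{|t−s|} for all t ≠ s, and E[e_t] = 0, E[e_t X_s] = 0 for all t, s, and E[e_t e_s] = 0 for t ≠ s. Define CE_n := (∏_{t=1}^n (1 + βX_t − f + e_t) − 1) − β(∏_{t=1}^n (1 + X_t) − 1). Then |E[CE_n] − (−nf + ∑_{k=1}^{n−1} (n−k)(β(β−1)γ_k − 2βfμ) + C(n,2)·f²)| ≤ C·n³M³. -/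
/-!
Write `Y_t = βX_t − f + e_t`, so that `CE_n = ∏(1 + Y_t) − β∏(1 + X_t) + β − 1`. Expanding
`∏(1 + y_t)` to second order (`1 + ∑ y_t + ∑_{s<t} y_t y_s`) leaves a remainder of size at most
`(nK)³(1 + K)ⁿ` when `|y_t| ≤ K`; with `K = (|β| + 2)M` and `nM ≤ 1` this is `O(n³M³)`. The
expectation of the second-order part only involves first and second moments, which the
hypotheses determine, and grouping the pairs `s < t` by their gap `t − s` gives the formula.
-/

open MeasureTheory Finset

section ProductExpansion

variable {ι : Type*} {s : Finset ι} {y F : ι → ℝ} {K c : ℝ} {N : ℕ}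

lemma abs_sum_mul_le (hK : 0 ≤ K) (hc : 0 ≤ c) (hs : #s ≤ N)
    (hy : ∀ i ∈ s, |y i| ≤ K) (hF : ∀ i ∈ s, |F i| ≤ c) :
    |∑ i ∈ s, y i * F i| ≤ N * K * c :=
  calc |∑ i ∈ s, y i * F i| ≤ ∑ i ∈ s, |y i * F i| := abs_sum_le_sum_abs _ _
    _ ≤ ∑ _i ∈ s, K * c := sum_le_sum fun i hi => by
        rw [abs_mul]; exact mul_le_mul (hy i hi) (hF i hi) (abs_nonneg _) hK
    _ ≤ N * K * c := by
        rw [sum_const, nsmul_eq_mul, mul_assoc]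
        gcongr

lemma abs_prod_one_add_le (hK : 0 ≤ K) (hs : #s ≤ N) (hy : ∀ i ∈ s, |y i| ≤ K) :
    |∏ i ∈ s, (1 + y i)| ≤ (1 + K) ^ N :=
  calc |∏ i ∈ s, (1 + y i)| = ∏ i ∈ s, |1 + y i| := abs_prod _ _
    _ ≤ ∏ _i ∈ s, (1 + K) := prod_le_prod (fun _ _ => abs_nonneg _) fun i hi =>
        (abs_add_le _ _).trans (by rw [abs_one]; linarith [hy i hi])
    _ ≤ (1 + K) ^ N := by
        rw [prod_const]; exact pow_le_pow_right₀ (by linarith) hs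

variable [LinearOrder ι]

/- Each order of the expansion comes from `prod_one_add_ordered`,
`∏ (1 + y i) = 1 + ∑ y i * ∏_{j < i} (1 + y j)`, and costs a factor `N * K`. -/
lemma abs_prod_one_add_sub_one_le (hK : 0 ≤ K) (hs : #s ≤ N) (hy : ∀ i ∈ s, |y i| ≤ K) :
    |∏ i ∈ s, (1 + y i) - 1| ≤ N * K * (1 + K) ^ N := by
  rw [prod_one_add_ordered, add_sub_cancel_left]
  exact abs_sum_mul_le hK (by positivity) hs hy fun i _ =>
    abs_prod_one_add_le hK ((card_filter_le _ _).trans hs) fun j hj => hy j (mem_filter.1 hj).1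

lemma abs_prod_one_add_sub_one_sub_sum_le (hK : 0 ≤ K) (hs : #s ≤ N)
    (hy : ∀ i ∈ s, |y i| ≤ K) :
    |∏ i ∈ s, (1 + y i) - 1 - ∑ i ∈ s, y i| ≤ (N * K) ^ 2 * (1 + K) ^ N := by
  have h : ∏ i ∈ s, (1 + y i) - 1 - ∑ i ∈ s, y i
      = ∑ i ∈ s, y i * (∏ j ∈ s with j < i, (1 + y j) - 1) := by
    simp only [mul_sub, mul_one, sum_sub_distrib, prod_one_add_ordered s y]
    ring
  rw [h]
  convert abs_sum_mul_le hK (by positivity) hs hy fun i _ =>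
    abs_prod_one_add_sub_one_le hK ((card_filter_le _ _).trans hs)
      fun j hj => hy j (mem_filter.1 hj).1 using 1
  ring

lemma abs_prod_one_add_sub_quadratic_le (hK : 0 ≤ K) (hs : #s ≤ N)
    (hy : ∀ i ∈ s, |y i| ≤ K) :
    |∏ i ∈ s, (1 + y i) - (1 + ∑ i ∈ s, y i + ∑ i ∈ s, ∑ j ∈ s with j < i, y i * y j)|
      ≤ (N * K) ^ 3 * (1 + K) ^ N := by
  have h : ∏ i ∈ s, (1 + y i) - (1 + ∑ i ∈ s, y i + ∑ i ∈ s, ∑ j ∈ s with j < i, y i * y j)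
      = ∑ i ∈ s, y i * (∏ j ∈ s with j < i, (1 + y j) - 1 - ∑ j ∈ s with j < i, y j) := by
    simp only [mul_sub, mul_one, mul_sum, sum_sub_distrib, prod_one_add_ordered s y]
    ring
  rw [h]
  convert abs_sum_mul_le hK (by positivity) hs hy fun i _ =>
    abs_prod_one_add_sub_one_sub_sum_le hK ((card_filter_le _ _).trans hs)
      fun j hj => hy j (mem_filter.1 hj).1 using 1
  ring

end ProductExpansion

lemma abs_mul_sub_add_le {b x f e M : ℝ} (hx : |x| ≤ M) (hf : |f| ≤ M) (he : |e| ≤ M) :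
    |b * x - f + e| ≤ (|b| + 2) * M :=
  calc |b * x - f + e| ≤ |b| * |x| + |f| + |e| := by
        rw [← abs_mul]; exact (abs_add_le _ _).trans (add_le_add_left (abs_sub _ _) _)
    _ ≤ (|b| + 2) * M := by nlinarith [abs_nonneg b]

section PairSums

variable {M : Type*} [AddCommMonoid M]

lemma sum_range_sum_range_sub (n : ℕ) (g : ℕ → M) :
    ∑ i ∈ range n, ∑ j ∈ range i, g (i - j) = ∑ k ∈ Icc 1 (n - 1), (n - k) • g k := by
  have hreflect : ∀ i, ∑ j ∈ range i, g (i - j) = ∑ k ∈ Icc 1 i, g k := fun i =>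
    sum_nbij' (i - ·) (i - ·) (by intro j; simp; omega) (by intro k; simp; omega)
      (by intro j; simp; omega) (by intro k; simp; omega) (by simp)
  simp_rw [hreflect]
  rw [sum_comm' (t' := Icc 1 (n - 1)) (s' := fun k => Ico k n) (by intro i k; simp; omega)]
  simp

lemma Fin.sum_sum_lt_sub (n : ℕ) (g : ℕ → M) :
    ∑ i : Fin n, ∑ j with j < i, g (i - j) = ∑ k ∈ Icc 1 (n - 1), (n - k) • g k := by
  have hinner : ∀ i : Fin n, ∑ j with j < i, g (i - j) = ∑ j ∈ range i, g (i - j) := fun i => by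
    rw [filter_gt_eq_Iio, ← Nat.Iio_eq_range, ← Fin.map_valEmbedding_Iio, sum_map]
    rfl
  simp_rw [hinner]
  rw [Fin.sum_univ_eq_sum_range (fun i => ∑ j ∈ range i, g (i - j)), sum_range_sum_range_sub]

end PairSums

lemma Fin.sum_card_filter_lt (n : ℕ) : ∑ i : Fin n, #{j | j < i} = n.choose 2 := by
  simp_rw [filter_gt_eq_Iio, Fin.card_Iio]
  rw [Fin.sum_univ_eq_sum_range (fun i => i), sum_range_id, Nat.choose_two_right]

section Expectation

variable {Ω ι : Type*} [MeasurableSpace Ω]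

noncomputable def secondOrderProdExpectation [Fintype ι] [LinearOrder ι] (P : Measure Ω)
    (Y : ι → Ω → ℝ) : ℝ :=
  1 + ∑ i, ∫ ω, Y i ω ∂P + ∑ i, ∑ j with j < i, ∫ ω, Y i ω * Y j ω ∂P

variable {P : Measure Ω} [IsProbabilityMeasure P]

section SecondOrder

variable [Fintype ι] {Y : ι → Ω → ℝ} {K : ℝ}

lemma integrable_prod_one_add (hY : ∀ i, AEStronglyMeasurable (Y i) P) (hK : 0 ≤ K)
    (hb : ∀ᵐ ω ∂P, ∀ i, |Y i ω| ≤ K) : Integrable (fun ω => ∏ i, (1 + Y i ω)) P :=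
  .of_bound (by fun_prop) ((1 + K) ^ Fintype.card ι)
    (hb.mono fun _ h => abs_prod_one_add_le hK le_rfl fun i _ => h i)

variable [LinearOrder ι]

theorem abs_integral_prod_one_add_sub_secondOrder_le (hY : ∀ i, AEStronglyMeasurable (Y i) P)
    (hK : 0 ≤ K) (hb : ∀ᵐ ω ∂P, ∀ i, |Y i ω| ≤ K) :
    |∫ ω, ∏ i, (1 + Y i ω) ∂P - secondOrderProdExpectation P Y|
      ≤ (Fintype.card ι * K) ^ 3 * (1 + K) ^ Fintype.card ι := by
  have hYi : ∀ i, Integrable (Y i) P := fun i => .of_bound (hY i) K (hb.mono fun _ h => h i)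
  have hYY : ∀ i j, Integrable (fun ω => Y i ω * Y j ω) P := fun i j =>
    (hYi j).bdd_mul (hY i) (hb.mono fun _ h => h i)
  have hquad : secondOrderProdExpectation P Y
      = ∫ ω, 1 + ∑ i, Y i ω + ∑ i, ∑ j with j < i, Y i ω * Y j ω ∂P := by
    simp (disch := fun_prop) only [secondOrderProdExpectation, integral_add, integral_finsetSum,
      integral_const]
    simp
  rw [hquad, ← integral_sub (integrable_prod_one_add hY hK hb) (by fun_prop), ← Real.norm_eq_abs]
  refine (norm_integral_le_of_norm_le_const
    (C := (Fintype.card ι * K) ^ 3 * (1 + K) ^ Fintype.card ι) (hb.mono fun ω h => ?_)).trans_eq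
    (by simp)
  simpa using abs_prod_one_add_sub_quadratic_le (s := univ) hK le_rfl fun i _ => h i

theorem abs_integral_compounding_sub_secondOrder_le (β : ℝ) {X : ι → Ω → ℝ}
    (hX : ∀ i, AEStronglyMeasurable (X i) P) (hY : ∀ i, AEStronglyMeasurable (Y i) P)
    (hK : 0 ≤ K) (hXb : ∀ᵐ ω ∂P, ∀ i, |X i ω| ≤ K) (hYb : ∀ᵐ ω ∂P, ∀ i, |Y i ω| ≤ K) :
    |∫ ω, (∏ i, (1 + Y i ω) - 1 - β * (∏ i, (1 + X i ω) - 1)) ∂P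
        - (secondOrderProdExpectation P Y - β * secondOrderProdExpectation P X + (β - 1))|
      ≤ (1 + |β|) * ((Fintype.card ι * K) ^ 3 * (1 + K) ^ Fintype.card ι) := by
  have hYprod := integrable_prod_one_add hY hK hYb
  have hXprod := integrable_prod_one_add hX hK hXb
  have hsplit : ∫ ω, (∏ i, (1 + Y i ω) - 1 - β * (∏ i, (1 + X i ω) - 1)) ∂P
      = ∫ ω, ∏ i, (1 + Y i ω) ∂P - β * ∫ ω, ∏ i, (1 + X i ω) ∂P + (β - 1) := by
    simp (disch := fun_prop) only [integral_sub, integral_const_mul, integral_const]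
    simp
    ring
  have hYerr := abs_integral_prod_one_add_sub_secondOrder_le hY hK hYb
  have hXerr := abs_integral_prod_one_add_sub_secondOrder_le hX hK hXb
  rw [hsplit]
  calc _ = |(∫ ω, ∏ i, (1 + Y i ω) ∂P - secondOrderProdExpectation P Y)
        - β * (∫ ω, ∏ i, (1 + X i ω) ∂P - secondOrderProdExpectation P X)| := by ring_nf
    _ ≤ |∫ ω, ∏ i, (1 + Y i ω) ∂P - secondOrderProdExpectation P Y|
        + |β| * |∫ ω, ∏ i, (1 + X i ω) ∂P - secondOrderProdExpectation P X| := by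
          rw [← abs_mul]; exact abs_sub _ _
    _ ≤ (1 + |β|) * ((Fintype.card ι * K) ^ 3 * (1 + K) ^ Fintype.card ι) := by
          nlinarith [abs_nonneg β]

end SecondOrder

section Leveraged

variable {X e : ι → Ω → ℝ} {β f M : ℝ}

lemma integral_leveraged (hX : ∀ t, AEStronglyMeasurable (X t) P)
    (he : ∀ t, AEStronglyMeasurable (e t) P) (hXb : ∀ t, ∀ᵐ ω ∂P, |X t ω| ≤ M)
    (heb : ∀ t, ∀ᵐ ω ∂P, |e t ω| ≤ M) (t : ι) :
    ∫ ω, (β * X t ω - f + e t ω) ∂P = β * ∫ ω, X t ω ∂P - f + ∫ ω, e t ω ∂P := by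
  have hXi : Integrable (X t) P := .of_bound (hX t) M (hXb t)
  have hei : Integrable (e t) P := .of_bound (he t) M (heb t)
  simp (disch := fun_prop) only [integral_add, integral_sub, integral_const_mul, integral_const]
  simp

lemma integral_leveraged_mul_leveraged (hX : ∀ t, AEStronglyMeasurable (X t) P)
    (he : ∀ t, AEStronglyMeasurable (e t) P) (hXb : ∀ t, ∀ᵐ ω ∂P, |X t ω| ≤ M)
    (heb : ∀ t, ∀ᵐ ω ∂P, |e t ω| ≤ M) (t s : ι) :
    ∫ ω, (β * X t ω - f + e t ω) * (β * X s ω - f + e s ω) ∂P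
      = β ^ 2 * ∫ ω, X t ω * X s ω ∂P - β * f * ∫ ω, X t ω ∂P - β * f * ∫ ω, X s ω ∂P
        + β * ∫ ω, e s ω * X t ω ∂P + β * ∫ ω, e t ω * X s ω ∂P
        - f * ∫ ω, e t ω ∂P - f * ∫ ω, e s ω ∂P + ∫ ω, e t ω * e s ω ∂P + f ^ 2 := by
  have hXi : ∀ t, Integrable (X t) P := fun t => .of_bound (hX t) M (hXb t)
  have hei : ∀ t, Integrable (e t) P := fun t => .of_bound (he t) M (heb t)
  have hXX : ∀ t s, Integrable (fun ω => X t ω * X s ω) P := fun t s =>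
    (hXi s).bdd_mul (hX t) (hXb t)
  have heX : ∀ t s, Integrable (fun ω => e t ω * X s ω) P := fun t s =>
    (hXi s).bdd_mul (he t) (heb t)
  have hee : ∀ t s, Integrable (fun ω => e t ω * e s ω) P := fun t s =>
    (hei s).bdd_mul (he t) (heb t)
  have hexpand : (fun ω => (β * X t ω - f + e t ω) * (β * X s ω - f + e s ω)) = fun ω =>
      β ^ 2 * (X t ω * X s ω) - β * f * X t ω - β * f * X s ω + β * (e s ω * X t ω)
        + β * (e t ω * X s ω) - f * e t ω - f * e s ω + e t ω * e s ω + f ^ 2 := by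
    ext; ring
  rw [hexpand]
  simp (disch := fun_prop) only [integral_add, integral_sub, integral_const_mul, integral_const]
  simp

end Leveraged

lemma secondOrderProdExpectation_leveraged_sub {n : ℕ} {X e : Fin n → Ω → ℝ} {β f M μ : ℝ}
    {γ : ℕ → ℝ} (hX : ∀ t, AEStronglyMeasurable (X t) P)
    (he : ∀ t, AEStronglyMeasurable (e t) P) (hXb : ∀ t, ∀ᵐ ω ∂P, |X t ω| ≤ M)
    (heb : ∀ t, ∀ᵐ ω ∂P, |e t ω| ≤ M)
    (hXμ : ∀ t, ∫ ω, X t ω ∂P = μ)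
    (hXX : ∀ t s : Fin n, t ≠ s → ∫ ω, X t ω * X s ω ∂P = γ (((t : ℤ) - (s : ℤ)).natAbs))
    (he0 : ∀ t, ∫ ω, e t ω ∂P = 0) (heX : ∀ t s, ∫ ω, e t ω * X s ω ∂P = 0)
    (hee : ∀ t s, t ≠ s → ∫ ω, e t ω * e s ω ∂P = 0) :
    secondOrderProdExpectation P (fun t ω => β * X t ω - f + e t ω)
        - β * secondOrderProdExpectation P X + (β - 1)
      = -n * f + ∑ k ∈ Icc 1 (n - 1), ((n : ℝ) - k) * (β * (β - 1) * γ k - 2 * β * f * μ)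
        + n.choose 2 * f ^ 2 := by
  have hXgap : ∀ i j : Fin n, j < i → ∫ ω, X i ω * X j ω ∂P = γ (i - j) := fun i j hji => by
    rw [hXX i j hji.ne']
    congr 1
    omega
  have hYgap : ∀ i j : Fin n, j < i → ∫ ω, (β * X i ω - f + e i ω) * (β * X j ω - f + e j ω) ∂P
      = β ^ 2 * γ (i - j) - 2 * β * f * μ + f ^ 2 := fun i j hji => by
    rw [integral_leveraged_mul_leveraged hX he hXb heb, hXgap i j hji, hXμ, hXμ, heX, heX,
      hee i j hji.ne', he0, he0]
    ring
  have hgap := Fin.sum_sum_lt_sub n (fun k => β * (β - 1) * γ k - 2 * β * f * μ)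
  have hcount := Fin.sum_card_filter_lt n
  have hcast : ∀ k ∈ Icc 1 (n - 1), ((n : ℝ) - k) * (β * (β - 1) * γ k - 2 * β * f * μ)
      = (n - k) • (β * (β - 1) * γ k - 2 * β * f * μ) := fun k hk => by
    rw [nsmul_eq_mul, Nat.cast_sub (by simp at hk; omega)]
  have hsplit : ∑ i : Fin n, ∑ j with j < i, (β ^ 2 * γ (i - j) - 2 * β * f * μ + f ^ 2)
      = ∑ i : Fin n, ∑ j with j < i, (β * (β - 1) * γ (i - j) - 2 * β * f * μ)
        + β * ∑ i : Fin n, ∑ j with j < i, γ (i - j) + ∑ i : Fin n, ∑ j with j < i, f ^ 2 := by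
    simp only [mul_sum, ← sum_add_distrib]
    exact sum_congr rfl fun _ _ => sum_congr rfl fun _ _ => by ring
  simp only [secondOrderProdExpectation, integral_leveraged hX he hXb heb, hXμ, he0,
    sum_congr rfl fun i _ => sum_congr rfl fun j hj => hYgap i j (mem_filter.1 hj).2,
    sum_congr rfl fun i _ => sum_congr rfl fun j hj => hXgap i j (mem_filter.1 hj).2]
  rw [hsplit, sum_congr rfl hcast, ← hgap, ← hcount]
  simp only [sum_const, card_univ, Fintype.card_fin, nsmul_eq_mul, Nat.cast_sum, ← sum_mul]
  ring

end Expectation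

lemma one_add_mul_pow_le_exp {n : ℕ} {B M : ℝ} (hB : 0 ≤ B) (hM : 0 ≤ M) (hnM : n * M ≤ 1) :
    (1 + B * M) ^ n ≤ Real.exp B :=
  calc (1 + B * M) ^ n ≤ Real.exp (B * M) ^ n := by
        gcongr
        linarith [Real.add_one_le_exp (B * M)]
    _ = Real.exp (B * (n * M)) := by rw [← Real.exp_nat_mul]; ring_nf
    _ ≤ Real.exp B := Real.exp_le_exp.2 (mul_le_of_le_one_right hB hnM)

theorem stmt7_general (β : ℤ) :
    ∃ C : ℝ, 0 < C ∧
      ∀ (Ω : Type) (_ : MeasurableSpace Ω) (P : Measure Ω), IsProbabilityMeasure P →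
      ∀ (n : ℕ), 1 ≤ n →
      ∀ (M : ℝ), 0 < M → (n : ℝ) * M ≤ 1 →
      ∀ (f : ℝ), |f| ≤ M →
      ∀ (X e : Fin n → Ω → ℝ) (μ : ℝ) (γ : ℕ → ℝ),
      (∀ t, Measurable (X t)) → (∀ t, Measurable (e t)) →
      (∀ t, ∀ᵐ ω ∂P, |X t ω| ≤ M) → (∀ t, ∀ᵐ ω ∂P, |e t ω| ≤ M) →
      (∀ t, ∫ ω, X t ω ∂P = μ) →
      (∀ t s : Fin n, t ≠ s →
        ∫ ω, X t ω * X s ω ∂P = γ (((t : ℤ) - (s : ℤ)).natAbs)) →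
      (∀ t, ∫ ω, e t ω ∂P = 0) →
      (∀ t s : Fin n, ∫ ω, e t ω * X s ω ∂P = 0) →
      (∀ t s : Fin n, t ≠ s → ∫ ω, e t ω * e s ω ∂P = 0) →
      |(∫ ω, (((∏ t, (1 + (β : ℝ) * X t ω - f + e t ω)) - 1)
            - (β : ℝ) * ((∏ t, (1 + X t ω)) - 1)) ∂P)
          - (-(n : ℝ) * f
            + (∑ k ∈ Finset.Icc 1 (n - 1),
                ((n : ℝ) - (k : ℝ)) * ((β : ℝ) * ((β : ℝ) - 1) * γ k - 2 * (β : ℝ) * f * μ))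
            + (n.choose 2 : ℝ) * f ^ 2)|
        ≤ C * (n : ℝ) ^ 3 * M ^ 3 := by
  refine ⟨(1 + |(β : ℝ)|) * ((|(β : ℝ)| + 2) ^ 3 * Real.exp (|(β : ℝ)| + 2)), by positivity, ?_⟩
  intro Ω _ P _ n _ M hM hnM f hf X e μ γ hXm hem hXb heb hXμ hXX he0 heX hee
  set B : ℝ := |(β : ℝ)| + 2
  have hX : ∀ t, AEStronglyMeasurable (X t) P := fun t => (hXm t).aestronglyMeasurable
  have he : ∀ t, AEStronglyMeasurable (e t) P := fun t => (hem t).aestronglyMeasurable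
  have hXB : ∀ᵐ ω ∂P, ∀ t, |X t ω| ≤ B * M := (ae_all_iff.2 hXb).mono fun ω h t =>
    (h t).trans (le_mul_of_one_le_left hM.le (by linarith [abs_nonneg (β : ℝ)]))
  have hYB : ∀ᵐ ω ∂P, ∀ t, |β * X t ω - f + e t ω| ≤ B * M := by
    filter_upwards [ae_all_iff.2 hXb, ae_all_iff.2 heb] with ω hXω heω t
    exact abs_mul_sub_add_le (hXω t) hf (heω t)
  have hfactor : ∀ ω, ∏ t, (1 + (β : ℝ) * X t ω - f + e t ω)
      = ∏ t, (1 + (β * X t ω - f + e t ω)) := fun ω => prod_congr rfl fun _ _ => by ring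
  simp_rw [hfactor]
  rw [← secondOrderProdExpectation_leveraged_sub hX he hXb heb hXμ hXX he0 heX hee]
  refine (abs_integral_compounding_sub_secondOrder_le β hX (by fun_prop) (by positivity) hXB
    hYB).trans ?_
  rw [Fintype.card_fin]
  have hgrowth := one_add_mul_pow_le_exp (by positivity : 0 ≤ B) hM.le hnM
  calc _ ≤ (1 + |(β : ℝ)|) * ((n * (B * M)) ^ 3 * Real.exp B) := by gcongr
    _ = _ := by ring

/-- Expected compounding effect approximation.  For a fixed nonzero integer
leverage ratio `β` there is a constant `C > 0` such that for any horizon `n ≥ 1`, bound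
`M` with `0 < M` and `nM ≤ 1`, fee `|f| ≤ M`, and bounded returns/tracking errors with
the stated moment structure, the expected compounding effect differs from
`-nf + ∑_{k=1}^{n-1} (n-k)(β(β-1)γ_k - 2βfμ) + C(n,2) f²` by at most `C n³ M³`. -/
theorem stmt7 (β : ℤ) (hβ : β ≠ 0) :
    ∃ C : ℝ, 0 < C ∧
      ∀ (Ω : Type) (_ : MeasurableSpace Ω) (P : Measure Ω), IsProbabilityMeasure P →
      ∀ (n : ℕ), 1 ≤ n →
      ∀ (M : ℝ), 0 < M → (n : ℝ) * M ≤ 1 →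
      ∀ (f : ℝ), |f| ≤ M →
      ∀ (X e : Fin n → Ω → ℝ) (μ : ℝ) (γ : ℕ → ℝ),
      (∀ t, Measurable (X t)) → (∀ t, Measurable (e t)) →
      (∀ t, ∀ᵐ ω ∂P, |X t ω| ≤ M) → (∀ t, ∀ᵐ ω ∂P, |e t ω| ≤ M) →
      (∀ t, ∫ ω, X t ω ∂P = μ) →
      (∀ t s : Fin n, t ≠ s →
        ∫ ω, X t ω * X s ω ∂P = γ (((t : ℤ) - (s : ℤ)).natAbs)) →
      (∀ t, ∫ ω, e t ω ∂P = 0) →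
      (∀ t s : Fin n, ∫ ω, e t ω * X s ω ∂P = 0) →
      (∀ t s : Fin n, t ≠ s → ∫ ω, e t ω * e s ω ∂P = 0) →
      |(∫ ω, (((∏ t, (1 + (β : ℝ) * X t ω - f + e t ω)) - 1)
            - (β : ℝ) * ((∏ t, (1 + X t ω)) - 1)) ∂P)
          - (-(n : ℝ) * f
            + (∑ k ∈ Finset.Icc 1 (n - 1),
                ((n : ℝ) - (k : ℝ)) * ((β : ℝ) * ((β : ℝ) - 1) * γ k - 2 * (β : ℝ) * f * μ))
            + (n.choose 2 : ℝ) * f ^ 2)|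
        ≤ C * (n : ℝ) ^ 3 * M ^ 3 :=
  stmt7_general β
end

section
/- Let β be an integer with β ≥ 2 or β ≤ −1, let σ > 0, let φ be a real number with 0 < |φ| < 1, and let n ≥ 2. Define S := β(β − 1) · (σ²/(1 − φ²)) · ∑_{k=1}^{n−1} (n − k) φ^k. Then S > 0 if φ > 0, and S < 0 if φ < 0. -/
/-!
Writing `n = m + 1`, the sum is `φ · ∑_{k<m} (m - k) φ^k`, and counting the weights `m - k` as
`#{j : k ≤ j < m}` turns `∑_{k<m} (m - k) φ^k` into `∑_{j<m} (1 + φ + ⋯ + φ^j)`, a sum of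
geometric sums that are all positive because `φ > -1`. Since `β(β - 1) > 0` for every integer
`β ∉ {0, 1}` and `σ²/(1 - φ²) > 0`, the sign of `S` is the sign of `φ`.
-/

open Finset

theorem sum_range_sub_mul_pow {R : Type*} [CommRing R] (x : R) (m : ℕ) :
    ∑ k ∈ range m, ((m : R) - k) * x ^ k = ∑ j ∈ range m, ∑ i ∈ range (j + 1), x ^ i := by
  induction m with
  | zero => simp
  | succ m ih =>
    rw [sum_range_succ (fun j => ∑ i ∈ range (j + 1), x ^ i), ← ih, sum_range_succ,
      sum_range_succ (fun i => x ^ i), ← add_assoc, ← sum_add_distrib]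
    push_cast
    congr 1
    · exact sum_congr rfl fun k _ => by ring
    · ring

theorem sum_range_sub_mul_pow_pos {R : Type*} [CommRing R] [LinearOrder R]
    [IsStrictOrderedRing R] {x : R} (hx : -1 < x) {m : ℕ} (hm : m ≠ 0) :
    0 < ∑ k ∈ range m, ((m : R) - k) * x ^ k := by
  rw [sum_range_sub_mul_pow]
  exact sum_pos (fun j _ => geom_sum_pos' (by linarith) j.succ_ne_zero) (nonempty_range_iff.2 hm)

theorem sum_Icc_sub_mul_pow {R : Type*} [CommRing R] (x : R) (m : ℕ) :
    ∑ k ∈ Icc 1 m, (((m + 1 : ℕ) : R) - k) * x ^ k =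
      x * ∑ k ∈ range m, ((m : R) - k) * x ^ k := by
  rw [← Ico_add_one_right_eq_Icc, sum_Ico_eq_sum_range, Nat.add_sub_cancel, mul_sum]
  refine sum_congr rfl fun k _ => ?_
  push_cast
  ring

theorem Int.mul_sub_one_pos {β : ℤ} (hβ : 2 ≤ β ∨ β ≤ -1) : 0 < β * (β - 1) := by
  rcases hβ with h | h <;> nlinarith

theorem stmt10_general (β : ℤ) (hβ : 2 ≤ β ∨ β ≤ -1) (σ : ℝ) (hσ : 0 < σ)
    (φ : ℝ) (hφ1 : |φ| < 1) (n : ℕ) (hn : 2 ≤ n) :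
    (0 < φ →
      0 < (β : ℝ) * ((β : ℝ) - 1) * (σ ^ 2 / (1 - φ ^ 2))
            * ∑ k ∈ Finset.Icc 1 (n - 1), ((n : ℝ) - (k : ℝ)) * φ ^ k)
    ∧ (φ < 0 →
      (β : ℝ) * ((β : ℝ) - 1) * (σ ^ 2 / (1 - φ ^ 2))
            * ∑ k ∈ Finset.Icc 1 (n - 1), ((n : ℝ) - (k : ℝ)) * φ ^ k < 0) := by
  obtain ⟨m, rfl⟩ : ∃ m, n = m + 1 := ⟨n - 1, by omega⟩
  have hββ : (0 : ℝ) < β * (β - 1) := by exact_mod_cast Int.mul_sub_one_pos hβ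
  have hφ2 : φ ^ 2 < 1 := by nlinarith [sq_abs φ, abs_nonneg φ]
  have hc : 0 < (β : ℝ) * (β - 1) * (σ ^ 2 / (1 - φ ^ 2)) :=
    mul_pos hββ (div_pos (pow_pos hσ 2) (by linarith))
  have hP : 0 < ∑ k ∈ range m, ((m : ℝ) - k) * φ ^ k :=
    sum_range_sub_mul_pow_pos (by linarith [neg_abs_le φ]) (by omega)
  rw [Nat.add_sub_cancel, sum_Icc_sub_mul_pow]
  exact ⟨fun hφ => mul_pos hc (mul_pos hφ hP),
    fun hφ => mul_neg_of_pos_of_neg hc (mul_neg_of_neg_of_pos hφ hP)⟩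

/-- sign of the leading term of the expected compounding effect under a
stationary AR(1) return model: `S = β(β-1) (σ²/(1-φ²)) ∑_{k=1}^{n-1} (n-k) φ^k` is
positive when `φ > 0` and negative when `φ < 0`. -/
theorem stmt10 (β : ℤ) (hβ : 2 ≤ β ∨ β ≤ -1) (σ : ℝ) (hσ : 0 < σ)
    (φ : ℝ) (hφ0 : 0 < |φ|) (hφ1 : |φ| < 1) (n : ℕ) (hn : 2 ≤ n) :
    (0 < φ →
      0 < (β : ℝ) * ((β : ℝ) - 1) * (σ ^ 2 / (1 - φ ^ 2))
            * ∑ k ∈ Finset.Icc 1 (n - 1), ((n : ℝ) - (k : ℝ)) * φ ^ k)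
    ∧ (φ < 0 →
      (β : ℝ) * ((β : ℝ) - 1) * (σ ^ 2 / (1 - φ ^ 2))
            * ∑ k ∈ Finset.Icc 1 (n - 1), ((n : ℝ) - (k : ℝ)) * φ ^ k < 0) :=
  stmt10_general β hβ σ hσ φ hφ1 n hn
end
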